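/- Let m ∈ ℕ, h = (h_1,…,h_d) ∈ ℤ^d, and suppose the Korobov cubature formula P_m(f,h) := m^{−1} Σ_{ν=1}^m f(w^ν), with nodes w^ν := (2π{νh_1/m}, …, 2π{νh_d/m}), is exact on 𝒯(Γ(N,d)). Let ℓ be the largest natural number with 2^ℓ ≤ 3^{−d}·N, and for s ∈ ℤ_+^d define V_s(f) := m^{−1} Σ_{ν=1}^m f(w^ν) 𝒱_{2^s}(· − w^ν). Then for any continuous function f on 𝕋^d: min_{s: ‖s‖₁ = ℓ} ‖f − V_s(f)‖_∞ ≤ (3^d + 1)·min_{s: ‖s‖₁ = ℓ} d(f, 𝒯(R(s)))_∞. -/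

import Mathlib

/-!
The de la Vallée Poussin kernel is `𝒱_j = j⁻¹ (F_{2j} - F_j)` with
`F_n = ∑_{l<n} D_l = |∑_{k<n} e^{ikt}|² ≥ 0`, so `|𝒱_j| ≤ j⁻¹ (F_{2j} + F_j)`,
a nonnegative trigonometric polynomial of degree `2j` with constant coefficient `3`.
When `‖s‖₁ = ℓ`, all frequencies of `w ↦ ∏ᵢ (majorant)(xᵢ - wᵢ)` and of
`w ↦ e^{i(k,w)} 𝒱_{2^s}(x - w)`, `k ∈ R(s)`, lie in `Γ(3^d 2^ℓ) ⊆ Γ(N)`, where the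
cubature formula is exact and so returns the constant coefficient. The first gives
`m⁻¹ ∑_ν |𝒱_{2^s}(x - w^ν)| ≤ 3^d`, the second `V_s u = u` on `𝒯(R(s))`, and then
`‖f - V_s f‖ ≤ ‖f - u‖ + ‖V_s (f - u)‖ ≤ (1 + 3^d) ‖f - u‖`.
-/

noncomputable section
open scoped BigOperators
open MeasureTheory

/-- The cube `[0, 2π]^d`, representing the torus `𝕋^d`. -/
def cube (d : ℕ) : Set (Fin d → ℝ) := Set.Icc 0 (fun _ => 2 * Real.pi)

/-- Uniform norm over the torus `𝕋^d = [0, 2π]^d`. -/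
def unifNorm {d : ℕ} (f : (Fin d → ℝ) → ℂ) : ℝ :=
  ⨆ x : cube d, ‖f ↑x‖

/-- The exponential `e^{i(k,x)}`. -/
def expFun {d : ℕ} (k : Fin d → ℤ) : (Fin d → ℝ) → ℂ :=
  fun x => Complex.exp (Complex.I * ∑ j, (k j : ℂ) * (x j : ℂ))

/-- `𝒯(Q)`: the space of trigonometric polynomials with frequencies in `Q`. -/
def trigSpace {d : ℕ} (Q : Finset (Fin d → ℤ)) : Submodule ℂ ((Fin d → ℝ) → ℂ) :=
  Submodule.span ℂ (expFun '' (Q : Set (Fin d → ℤ)))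

/-- `R(s) = {k : |k_j| < 2^{s_j}}`. -/
def Rbox {d : ℕ} (s : Fin d → ℕ) : Finset (Fin d → ℤ) :=
  Fintype.piFinset fun j => Finset.Ioo (-(2 ^ (s j) : ℤ)) ((2 : ℤ) ^ (s j))

/-- Best uniform approximation `d(f, 𝒯(Q))_∞`. -/
def distT {d : ℕ} (f : (Fin d → ℝ) → ℂ) (Q : Finset (Fin d → ℤ)) : ℝ :=
  ⨅ u : trigSpace Q, unifNorm (f - (u : (Fin d → ℝ) → ℂ))

/-- `2π`-periodicity in each variable. -/
def Periodic2Pi {d : ℕ} (f : (Fin d → ℝ) → ℂ) : Prop :=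
  ∀ (x : Fin d → ℝ) (j : Fin d), f (x + (2 * Real.pi) • (Pi.single j 1 : Fin d → ℝ)) = f x

/-- The Fibonacci numbers `b_0 = b_1 = 1`, `b_n = b_{n-1} + b_{n-2}`. -/
def fibb : ℕ → ℕ
  | 0 => 1
  | 1 => 1
  | n + 2 => fibb (n + 1) + fibb n

/-- The hyperbolic cross `Γ(N, d)`. -/
def hyperCross (d N : ℕ) : Finset (Fin d → ℤ) :=
  (Fintype.piFinset fun _ : Fin d => Finset.Icc (-(N : ℤ)) (N : ℤ)).filter
    fun k => (∏ j, max |k j| 1) ≤ (N : ℤ)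

/-- The Fibonacci points `y^ν = (2πν/b_n, 2π{ν b_{n-1}/b_n})`. -/
def fibPoint (n ν : ℕ) : Fin 2 → ℝ :=
  ![2 * Real.pi * ν / fibb n, 2 * Real.pi * Int.fract ((↑(ν * fibb (n - 1)) : ℝ) / fibb n)]

/-- The Dirichlet kernel `𝒟_l`. -/
def dirichletK (l : ℕ) (x : ℝ) : ℂ :=
  ∑ k ∈ Finset.Icc (-(l : ℤ)) (l : ℤ), Complex.exp (Complex.I * (k : ℂ) * (x : ℂ))

/-- The de la Vallée Poussin kernel `𝒱_j`. -/
def vpK (j : ℕ) (x : ℝ) : ℂ := (j : ℂ)⁻¹ * ∑ l ∈ Finset.Ico j (2 * j), dirichletK l x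

/-- The multivariate de la Vallée Poussin kernel `𝒱_{(j_1,…,j_d)}`. -/
def vpKd {d : ℕ} (j : Fin d → ℕ) (x : Fin d → ℝ) : ℂ := ∏ i, vpK (j i) (x i)

/-- The Korobov points `w^ν = (2π{νh_1/m}, …, 2π{νh_d/m})`. -/
def korNode (m : ℕ) {d : ℕ} (h : Fin d → ℤ) (ν : ℕ) : Fin d → ℝ :=
  fun i => 2 * Real.pi * Int.fract ((ν : ℝ) * (h i : ℝ) / (m : ℝ))

/-- The sampling operator `V_s` associated with the Korobov points:
`V_s(f)(x) = m⁻¹ ∑_ν f(w^ν) 𝒱_{2^s}(x − w^ν)`. -/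
def korV (m : ℕ) {d : ℕ} (h : Fin d → ℤ) (s : Fin d → ℕ) (f : (Fin d → ℝ) → ℂ) :
    (Fin d → ℝ) → ℂ :=
  fun x => (m : ℂ)⁻¹ * ∑ ν ∈ Finset.Icc 1 m,
    f (korNode m h ν) * vpKd (fun i => 2 ^ s i) (x - korNode m h ν)

open Finset Complex

def trigPoly (n : ℕ) (b : ℤ → ℂ) (t : ℝ) : ℂ :=
  ∑ c ∈ Icc (-(n : ℤ)) n, b c * exp (I * c * t)

lemma exp_mul_trigPoly_sub (k : ℤ) (n : ℕ) (b : ℤ → ℂ) (x w : ℝ) :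
    exp (I * k * w) * trigPoly n b (x - w) =
      ∑ c ∈ Icc (-(n : ℤ)) n, b c * exp (I * c * x) * exp (I * ((k - c : ℤ) : ℂ) * w) := by
  rw [trigPoly, mul_sum]
  refine sum_congr rfl fun c _ => ?_
  have hexp : exp (I * k * w) * exp (I * c * (x - w : ℝ)) =
      exp (I * c * x) * exp (I * ((k - c : ℤ) : ℂ) * w) := by
    rw [← exp_add, ← exp_add]
    push_cast
    ring_nf
  linear_combination b c * hexp

def geomExpSum (n : ℕ) (t : ℝ) : ℂ := ∑ k ∈ range n, exp (I * k * t)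

def fejerSum (n : ℕ) (t : ℝ) : ℂ := ∑ l ∈ range n, dirichletK l t

/-- The term `(a, b)` of `|∑_{k<n} e^{ikt}|² = ∑_{a,b<n} e^{i(a-b)t}` corresponds to the term
`(l, c) = (max a b, a - b)` of `∑_{l<n} ∑_{|c|≤l} e^{ict}`. -/
lemma fejerSum_eq_normSq (n : ℕ) (t : ℝ) : fejerSum n t = normSq (geomExpSum n t) := by
  have hconj (b : ℕ) : (starRingEnd ℂ) (exp (I * b * t)) = exp (-(I * b * t)) := by
    rw [← exp_conj, map_mul, map_mul, conj_I, conj_natCast, conj_ofReal]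
    ring_nf
  rw [← mul_conj, geomExpSum, map_sum, sum_mul_sum, ← sum_product', fejerSum]
  simp only [dirichletK]
  rw [sum_sigma']
  refine sum_nbij' (fun q => ((q.1 + min q.2 0 : ℤ).toNat, (q.1 - max q.2 0 : ℤ).toNat))
    (fun p => ⟨max p.1 p.2, (p.1 : ℤ) - p.2⟩) ?_ ?_ ?_ ?_ ?_
  · intro q hq
    simp only [mem_sigma, mem_range, mem_Icc] at hq
    simp only [mem_product, mem_range]
    omega
  · intro p hp
    simp only [mem_product, mem_range] at hp
    simp only [mem_sigma, mem_range, mem_Icc]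
    omega
  · rintro ⟨l, c⟩ hq
    simp only [mem_sigma, mem_range, mem_Icc] at hq
    simp only [Sigma.mk.injEq, heq_iff_eq]
    omega
  · rintro ⟨a, b⟩ _
    ext <;> simp only <;> omega
  · rintro ⟨l, c⟩ hq
    simp only [mem_sigma, mem_range, mem_Icc] at hq
    have hc : (c : ℂ) = ((l + min c 0 : ℤ).toNat : ℂ) - ((l - max c 0 : ℤ).toNat : ℂ) := by
      have : c = ((l + min c 0 : ℤ).toNat : ℤ) - ((l - max c 0 : ℤ).toNat : ℤ) := by omega
      exact_mod_cast this
    rw [hconj, ← exp_add, hc]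
    ring_nf

lemma fejerSum_eq_trigPoly {n B : ℕ} (hn : n ≤ B) (t : ℝ) :
    fejerSum n t = trigPoly B (fun c => ((n - c.natAbs : ℕ) : ℂ)) t := by
  have hD : ∀ l ∈ range n, dirichletK l t =
      ∑ c ∈ Icc (-(B : ℤ)) B, if c.natAbs ≤ l then exp (I * c * t) else 0 := by
    intro l hl
    rw [mem_range] at hl
    rw [dirichletK, ← sum_filter]
    congr 1
    ext c
    simp only [mem_filter, mem_Icc]
    omega
  rw [fejerSum, sum_congr rfl hD, sum_comm, trigPoly]
  refine sum_congr rfl fun c _ => ?_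
  have hcard : (range n).filter (fun l => c.natAbs ≤ l) = Ico c.natAbs n := by
    ext l
    simp only [mem_filter, mem_range, mem_Ico]
    omega
  rw [← sum_filter, hcard, sum_const, Nat.card_Ico, nsmul_eq_mul]

lemma vpK_eq_fejerSum (j : ℕ) (t : ℝ) :
    vpK j t = (j : ℂ)⁻¹ * (fejerSum (2 * j) t - fejerSum j t) := by
  rw [vpK, sum_Ico_eq_sub _ (by omega)]
  rfl

def vpCoeff (j : ℕ) (c : ℤ) : ℂ :=
  (j : ℂ)⁻¹ * (((2 * j - c.natAbs : ℕ) : ℂ) - ((j - c.natAbs : ℕ) : ℂ))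

lemma vpCoeff_eq_one {j : ℕ} (hj : 0 < j) {c : ℤ} (hc : c.natAbs ≤ j) : vpCoeff j c = 1 := by
  have : (j : ℂ) ≠ 0 := by exact_mod_cast hj.ne'
  rw [vpCoeff, Nat.cast_sub (by omega), Nat.cast_sub hc]
  field_simp
  push_cast
  ring

lemma vpK_eq_trigPoly (j : ℕ) (t : ℝ) : vpK j t = trigPoly (2 * j) (vpCoeff j) t := by
  rw [vpK_eq_fejerSum, fejerSum_eq_trigPoly le_rfl, fejerSum_eq_trigPoly (show j ≤ 2 * j by omega),
    trigPoly, trigPoly, trigPoly, ← sum_sub_distrib, mul_sum]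
  refine sum_congr rfl fun c _ => ?_
  rw [vpCoeff]
  ring

def vpMajorant (j : ℕ) (t : ℝ) : ℝ :=
  (j : ℝ)⁻¹ * (normSq (geomExpSum (2 * j) t) + normSq (geomExpSum j t))

lemma norm_vpK_le_vpMajorant (j : ℕ) (t : ℝ) : ‖vpK j t‖ ≤ vpMajorant j t := by
  rw [vpK_eq_fejerSum, norm_mul, norm_inv, norm_natCast, vpMajorant]
  gcongr
  refine (norm_sub_le _ _).trans_eq ?_
  rw [fejerSum_eq_normSq, fejerSum_eq_normSq, norm_real, norm_real,
    Real.norm_of_nonneg (normSq_nonneg _), Real.norm_of_nonneg (normSq_nonneg _)]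

def vpMajorantCoeff (j : ℕ) (c : ℤ) : ℂ :=
  (j : ℂ)⁻¹ * (((2 * j - c.natAbs : ℕ) : ℂ) + ((j - c.natAbs : ℕ) : ℂ))

lemma vpMajorantCoeff_zero {j : ℕ} (hj : 0 < j) : vpMajorantCoeff j 0 = 3 := by
  have : (j : ℂ) ≠ 0 := by exact_mod_cast hj.ne'
  simp only [vpMajorantCoeff, Int.natAbs_zero, Nat.sub_zero]
  field_simp
  push_cast
  ring

lemma ofReal_vpMajorant_eq_trigPoly (j : ℕ) (t : ℝ) :
    (vpMajorant j t : ℂ) = trigPoly (2 * j) (vpMajorantCoeff j) t := by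
  rw [vpMajorant, ofReal_mul, ofReal_add, ← fejerSum_eq_normSq, ← fejerSum_eq_normSq,
    fejerSum_eq_trigPoly le_rfl, fejerSum_eq_trigPoly (show j ≤ 2 * j by omega),
    trigPoly, trigPoly, trigPoly, ← sum_add_distrib, mul_sum]
  refine sum_congr rfl fun c _ => ?_
  rw [vpMajorantCoeff]
  push_cast
  ring

lemma expFun_eq_prod {d : ℕ} (k : Fin d → ℤ) (x : Fin d → ℝ) :
    expFun k x = ∏ i, exp (I * k i * x i) := by
  rw [expFun, mul_sum, exp_sum]
  simp only [mul_assoc]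

lemma expFun_zero {d : ℕ} : expFun (0 : Fin d → ℤ) = 1 := by
  funext x
  simp [expFun]

lemma integral_exp_Icc (c : ℤ) :
    ∫ t in Set.Icc 0 (2 * Real.pi), exp (I * c * t) =
      if c = 0 then ((2 * Real.pi : ℝ) : ℂ) else 0 := by
  have h2π : (0 : ℝ) ≤ 2 * Real.pi := by positivity
  split_ifs with hc
  · simp [hc, Real.volume_real_Icc_of_le h2π]
  · have hc' : I * c ≠ 0 := by simp [hc]
    rw [integral_Icc_eq_integral_Ioc, ← intervalIntegral.integral_of_le h2π,
      integral_exp_mul_complex hc']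
    have hperiod : I * c * ((2 * Real.pi : ℝ) : ℂ) = c * (2 * Real.pi * I) := by
      push_cast
      ring
    rw [hperiod, exp_int_mul_two_pi_mul_I, ofReal_zero, mul_zero, exp_zero, sub_self, zero_div]

lemma integral_expFun {d : ℕ} (k : Fin d → ℤ) :
    ∫ x in cube d, expFun k x = if k = 0 then (((2 * Real.pi) ^ d : ℝ) : ℂ) else 0 := by
  have hcube : cube d = Set.univ.pi fun _ => Set.Icc 0 (2 * Real.pi) := (Set.pi_univ_Icc _ _).symm
  simp only [hcube, expFun_eq_prod, volume_pi, Measure.restrict_pi_pi]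
  rw [integral_fintype_prod_eq_prod (fun i (t : ℝ) => exp (I * k i * t))]
  simp only [integral_exp_Icc, prod_ite_zero, mem_univ, true_imp_iff, funext_iff, Pi.zero_apply,
    prod_const, card_univ, Fintype.card_fin, ofReal_pow]

/-- The Korobov cubature formula `P_m(·, h)`. -/
def cubature (m : ℕ) {d : ℕ} (h : Fin d → ℤ) : ((Fin d → ℝ) → ℂ) →ₗ[ℂ] ℂ :=
  (m : ℂ)⁻¹ • ∑ ν ∈ Icc 1 m, LinearMap.proj (korNode m h ν)

lemma cubature_apply (m : ℕ) {d : ℕ} (h : Fin d → ℤ) (g : (Fin d → ℝ) → ℂ) :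
    cubature m h g = (m : ℂ)⁻¹ * ∑ ν ∈ Icc 1 m, g (korNode m h ν) := by
  simp [cubature]

lemma korV_eq_cubature (m : ℕ) {d : ℕ} (h : Fin d → ℤ) (s : Fin d → ℕ)
    (f : (Fin d → ℝ) → ℂ) (x : Fin d → ℝ) :
    korV m h s f x = cubature m h (fun w => f w * vpKd (fun i => 2 ^ s i) (x - w)) := by
  rw [cubature_apply, korV]

lemma korNode_mem_cube (m : ℕ) {d : ℕ} (h : Fin d → ℤ) (ν : ℕ) : korNode m h ν ∈ cube d := by
  refine ⟨fun i => ?_, fun i => ?_⟩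
  · have := Int.fract_nonneg ((ν : ℝ) * h i / m)
    simp only [korNode, Pi.zero_apply]
    positivity
  · have := (Int.fract_lt_one ((ν : ℝ) * h i / m)).le
    simp only [korNode]
    nlinarith [Real.pi_pos]

lemma continuous_of_mem_trigSpace {d : ℕ} {Q : Finset (Fin d → ℤ)} {u : (Fin d → ℝ) → ℂ}
    (hu : u ∈ trigSpace Q) : Continuous u := by
  induction hu using Submodule.span_induction with
  | mem v hv =>
    obtain ⟨k, -, rfl⟩ := hv
    unfold expFun
    fun_prop
  | zero => exact continuous_const
  | add v w _ _ hv hw => exact hv.add hw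
  | smul c v _ hv => exact hv.const_smul c

lemma unifNorm_nonneg {d : ℕ} (f : (Fin d → ℝ) → ℂ) : 0 ≤ unifNorm f :=
  Real.iSup_nonneg fun _ => norm_nonneg _

lemma unifNorm_le {d : ℕ} {f : (Fin d → ℝ) → ℂ} {C : ℝ} (hC : 0 ≤ C)
    (hf : ∀ x ∈ cube d, ‖f x‖ ≤ C) : unifNorm f ≤ C :=
  Real.iSup_le (fun x => hf x x.2) hC

lemma norm_le_unifNorm {d : ℕ} {f : (Fin d → ℝ) → ℂ} (hf : Continuous f) {x : Fin d → ℝ}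
    (hx : x ∈ cube d) : ‖f x‖ ≤ unifNorm f := by
  have hbdd := ((isCompact_Icc : IsCompact (cube d)).image (continuous_norm.comp hf)).bddAbove
  rw [Set.image_eq_range] at hbdd
  exact le_ciSup hbdd (⟨x, hx⟩ : cube d)

def korVₗ (m : ℕ) {d : ℕ} (h : Fin d → ℤ) (s : Fin d → ℕ) :
    ((Fin d → ℝ) → ℂ) →ₗ[ℂ] ((Fin d → ℝ) → ℂ) where
  toFun := korV m h s
  map_add' f g := by
    funext x
    simp only [korV, Pi.add_apply, add_mul, sum_add_distrib, mul_add]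
  map_smul' c f := by
    funext x
    simp only [korV, Pi.smul_apply, smul_eq_mul, mul_sum, RingHom.id_apply]
    refine sum_congr rfl fun ν _ => ?_
    ring

section Exactness

variable {d m N : ℕ} {h : Fin d → ℤ}

lemma mem_hyperCross_of_abs_le (k : Fin d → ℤ) {a : ℕ} (s : Fin d → ℕ) (ha : 0 < a)
    (hk : ∀ i, |k i| ≤ a * 2 ^ s i) (hN : a ^ d * 2 ^ (∑ i, s i) ≤ N) : k ∈ hyperCross d N := by
  have hprod : ∏ i, a * 2 ^ s i = a ^ d * 2 ^ (∑ i, s i) := by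
    rw [prod_mul_distrib, prod_const, card_univ, Fintype.card_fin, prod_pow_eq_pow_sum]
  have hpos : ∀ i, 0 < a * 2 ^ s i := fun i => by positivity
  refine mem_filter.2 ⟨Fintype.mem_piFinset.2 fun i => mem_Icc.2 (abs_le.1 ?_), ?_⟩
  · have : a * 2 ^ s i ≤ N :=
      (single_le_prod' (fun j _ => hpos j) (mem_univ i)).trans (hprod ▸ hN)
    exact (hk i).trans (by exact_mod_cast this)
  · calc ∏ i, max |k i| 1 ≤ ∏ i, ((a * 2 ^ s i : ℕ) : ℤ) :=
          prod_le_prod (fun _ _ => by positivity) fun i _ =>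
            max_le (by exact_mod_cast hk i) (by exact_mod_cast hpos i)
      _ ≤ N := by exact_mod_cast hprod ▸ hN

variable (hex : ∀ f ∈ trigSpace (hyperCross d N),
      (m : ℂ)⁻¹ * ∑ ν ∈ Finset.Icc 1 m, f (korNode m h ν) =
        (((2 * Real.pi) ^ d : ℝ) : ℂ)⁻¹ * ∫ x in cube d, f x)
include hex

lemma cubature_expFun {k : Fin d → ℤ} (hk : k ∈ hyperCross d N) :
    cubature m h (expFun k) = if k = 0 then 1 else 0 := by
  rw [cubature_apply, hex _ (Submodule.subset_span ⟨k, hk, rfl⟩), integral_expFun]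
  split_ifs
  · exact inv_mul_cancel₀ (by exact_mod_cast (pow_pos Real.two_pi_pos d).ne')
  · exact mul_zero _

lemma cubature_expFun_mul_prod_trigPoly (n : Fin d → ℕ) (b : Fin d → ℤ → ℂ) {k : Fin d → ℤ}
    (hk : ∀ i, |k i| ≤ n i)
    (hΓ : ∀ p ∈ Fintype.piFinset fun i => Icc (-(n i : ℤ)) (n i), k - p ∈ hyperCross d N)
    (x : Fin d → ℝ) :
    cubature m h (fun w => expFun k w * ∏ i, trigPoly (n i) (b i) (x i - w i)) =
      (∏ i, b i (k i)) * expFun k x := by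
  have hexpand : (fun w => expFun k w * ∏ i, trigPoly (n i) (b i) (x i - w i)) =
      ∑ p ∈ Fintype.piFinset fun i => Icc (-(n i : ℤ)) (n i),
        (∏ i, b i (p i) * exp (I * p i * x i)) • expFun (k - p) := by
    funext w
    simp only [expFun_eq_prod, ← prod_mul_distrib, exp_mul_trigPoly_sub, prod_univ_sum,
      Finset.sum_apply, Pi.smul_apply, smul_eq_mul, Pi.sub_apply]
  have hkmem : k ∈ Fintype.piFinset fun i => Icc (-(n i : ℤ)) (n i) :=
    Fintype.mem_piFinset.2 fun i => mem_Icc.2 (abs_le.1 (hk i))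
  rw [hexpand, map_sum, sum_eq_single_of_mem k hkmem]
  · rw [map_smul, cubature_expFun hex (hΓ k hkmem), sub_self, if_pos rfl, smul_eq_mul, mul_one,
      prod_mul_distrib, expFun_eq_prod]
  · intro p hp hpk
    rw [map_smul, cubature_expFun hex (hΓ p hp), if_neg (sub_ne_zero.2 hpk.symm), smul_zero]

lemma cubature_prod_vpMajorant (s : Fin d → ℕ) (hN : 2 ^ d * 2 ^ (∑ i, s i) ≤ N)
    (x : Fin d → ℝ) :
    cubature m h (fun w => ∏ i, (vpMajorant (2 ^ s i) (x i - w i) : ℂ)) = 3 ^ d := by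
  have hΓ : ∀ p ∈ Fintype.piFinset fun i => Icc (-((2 * 2 ^ s i : ℕ) : ℤ)) (2 * 2 ^ s i : ℕ),
      0 - p ∈ hyperCross d N := by
    intro p hp
    refine mem_hyperCross_of_abs_le _ s two_pos (fun i => ?_) hN
    have := abs_le.2 (mem_Icc.1 (Fintype.mem_piFinset.1 hp i))
    simpa using this
  have key := cubature_expFun_mul_prod_trigPoly hex (fun i => 2 * 2 ^ s i)
    (fun i => vpMajorantCoeff (2 ^ s i)) (k := 0) (fun i => by positivity) hΓ x
  simp only [expFun_zero, Pi.one_apply, one_mul, mul_one, Pi.zero_apply,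
    vpMajorantCoeff_zero (pow_pos two_pos _), prod_const, card_univ, Fintype.card_fin] at key
  simpa only [ofReal_vpMajorant_eq_trigPoly] using key

lemma sum_norm_vpKd_le (s : Fin d → ℕ) (hN : 2 ^ d * 2 ^ (∑ i, s i) ≤ N) (x : Fin d → ℝ) :
    (m : ℝ)⁻¹ * ∑ ν ∈ Icc 1 m, ‖vpKd (fun i => 2 ^ s i) (x - korNode m h ν)‖ ≤ 3 ^ d := by
  have hmaj := cubature_prod_vpMajorant hex s hN x
  rw [cubature_apply] at hmaj
  have hreal : (m : ℝ)⁻¹ * ∑ ν ∈ Icc 1 m, ∏ i, vpMajorant (2 ^ s i) (x i - korNode m h ν i) =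
      3 ^ d := by
    apply ofReal_injective
    push_cast
    exact hmaj
  rw [← hreal]
  gcongr with ν
  rw [vpKd, norm_prod]
  exact prod_le_prod (fun _ _ => norm_nonneg _) fun i _ => norm_vpK_le_vpMajorant _ _

lemma korV_expFun (s : Fin d → ℕ) (hN : 3 ^ d * 2 ^ (∑ i, s i) ≤ N) {k : Fin d → ℤ}
    (hk : k ∈ Rbox s) : korV m h s (expFun k) = expFun k := by
  have hk' (i : Fin d) : |k i| < 2 ^ s i := abs_lt.2 (mem_Ioo.1 (Fintype.mem_piFinset.1 hk i))
  have hpow (i : Fin d) : (0 : ℤ) < 2 ^ s i := by positivity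
  have hΓ : ∀ p ∈ Fintype.piFinset fun i => Icc (-((2 * 2 ^ s i : ℕ) : ℤ)) (2 * 2 ^ s i : ℕ),
      k - p ∈ hyperCross d N := by
    intro p hp
    refine mem_hyperCross_of_abs_le _ s three_pos (fun i => ?_) hN
    have := abs_le.2 (mem_Icc.1 (Fintype.mem_piFinset.1 hp i))
    push_cast at this ⊢
    rw [Pi.sub_apply]
    linarith [abs_sub (k i) (p i), hk' i]
  funext x
  have key := cubature_expFun_mul_prod_trigPoly hex (fun i => 2 * 2 ^ s i)
    (fun i => vpCoeff (2 ^ s i)) (fun i => by push_cast; linarith [hk' i, hpow i]) hΓ x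
  have hcoeff (i : Fin d) : vpCoeff (2 ^ s i) (k i) = 1 := by
    refine vpCoeff_eq_one (pow_pos two_pos _) ?_
    have := (hk' i).le
    rw [Int.abs_eq_natAbs] at this
    exact_mod_cast this
  rw [prod_congr rfl fun i _ => hcoeff i] at key
  rw [korV_eq_cubature]
  simp only [vpKd, Pi.sub_apply, vpK_eq_trigPoly]
  simpa using key

variable {s : Fin d → ℕ} (hN : 3 ^ d * 2 ^ (∑ i, s i) ≤ N)
include hN

lemma korV_eq_self_of_mem_trigSpace {u : (Fin d → ℝ) → ℂ} (hu : u ∈ trigSpace (Rbox s)) :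
    korV m h s u = u :=
  LinearMap.eqOn_span' (f := korVₗ m h s) (g := LinearMap.id)
    (by rintro _ ⟨k, hk, rfl⟩; exact korV_expFun hex s hN hk) hu

lemma norm_korV_le {g : (Fin d → ℝ) → ℂ} (hg : Continuous g) (x : Fin d → ℝ) :
    ‖korV m h s g x‖ ≤ 3 ^ d * unifNorm g := by
  have hN' : 2 ^ d * 2 ^ (∑ i, s i) ≤ N :=
    le_trans (Nat.mul_le_mul_right _ (Nat.pow_le_pow_left (by norm_num) d)) hN
  calc ‖korV m h s g x‖
      ≤ (m : ℝ)⁻¹ * ∑ ν ∈ Icc 1 m,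
          unifNorm g * ‖vpKd (fun i => 2 ^ s i) (x - korNode m h ν)‖ := by
        rw [korV, norm_mul, norm_inv, norm_natCast]
        gcongr
        refine (norm_sum_le _ _).trans (sum_le_sum fun ν _ => ?_)
        rw [norm_mul]
        gcongr
        exact norm_le_unifNorm hg (korNode_mem_cube m h ν)
    _ = unifNorm g * ((m : ℝ)⁻¹ * ∑ ν ∈ Icc 1 m,
          ‖vpKd (fun i => 2 ^ s i) (x - korNode m h ν)‖) := by
        rw [← mul_sum]
        ring
    _ ≤ unifNorm g * 3 ^ d := by
        gcongr
        · exact unifNorm_nonneg g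
        · exact sum_norm_vpKd_le hex s hN' x
    _ = 3 ^ d * unifNorm g := mul_comm _ _

lemma unifNorm_sub_korV_le {f u : (Fin d → ℝ) → ℂ} (hf : Continuous f)
    (hu : u ∈ trigSpace (Rbox s)) :
    unifNorm (f - korV m h s f) ≤ (3 ^ d + 1) * unifNorm (f - u) := by
  have hg : Continuous (f - u) := hf.sub (continuous_of_mem_trigSpace hu)
  have hsplit : f - korV m h s f = (f - u) - korV m h s (f - u) := by
    have hlin : korV m h s (f - u) = korV m h s f - korV m h s u := map_sub (korVₗ m h s) f u
    rw [hlin, korV_eq_self_of_mem_trigSpace hex hN hu]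
    abel
  refine unifNorm_le (by positivity [unifNorm_nonneg (f - u)]) fun x hx => ?_
  calc ‖(f - korV m h s f) x‖
      ≤ ‖(f - u) x‖ + ‖korV m h s (f - u) x‖ := by
        rw [hsplit, Pi.sub_apply]
        exact norm_sub_le _ _
    _ ≤ unifNorm (f - u) + 3 ^ d * unifNorm (f - u) :=
        add_le_add (norm_le_unifNorm hg hx) (norm_korV_le hex hN hg x)
    _ = (3 ^ d + 1) * unifNorm (f - u) := by ring

lemma unifNorm_sub_korV_le_distT {f : (Fin d → ℝ) → ℂ} (hf : Continuous f) :
    unifNorm (f - korV m h s f) ≤ (3 ^ d + 1) * distT f (Rbox s) := by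
  rw [distT, Real.mul_iInf_of_nonneg (by positivity)]
  exact le_ciInf fun u => unifNorm_sub_korV_le hex hN hf u.2

end Exactness

lemma iInf_le_mul_iInf {ι : Type*} {f g : ι → ℝ} {c : ℝ} (hf : ∀ i, 0 ≤ f i) (hc : 0 ≤ c)
    (hfg : ∀ i, f i ≤ c * g i) : ⨅ i, f i ≤ c * ⨅ i, g i := by
  rcases isEmpty_or_nonempty ι with hι | hι
  · simp [Real.iInf_of_isEmpty]
  · rw [Real.mul_iInf_of_nonneg hc]
    exact ciInf_mono ⟨0, by rintro _ ⟨i, rfl⟩; exact hf i⟩ hfg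

theorem stmt16_general (d m N : ℕ) (h : Fin d → ℤ)
    (hex : ∀ f ∈ trigSpace (hyperCross d N),
      (m : ℂ)⁻¹ * ∑ ν ∈ Finset.Icc 1 m, f (korNode m h ν) =
        (((2 * Real.pi) ^ d : ℝ) : ℂ)⁻¹ * ∫ x in cube d, f x)
    (ℓ : ℕ) (hℓ : IsGreatest {k : ℕ | (2 : ℝ) ^ k ≤ ((3 : ℝ) ^ d)⁻¹ * N} ℓ)
    (f : (Fin d → ℝ) → ℂ) (hf : Continuous f) :
    (⨅ s : {s : Fin d → ℕ // (∑ j, s j) = ℓ}, unifNorm (f - korV m h s f)) ≤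
      (3 ^ d + 1) *
        ⨅ s : {s : Fin d → ℕ // (∑ j, s j) = ℓ}, distT f (Rbox (s : Fin d → ℕ)) := by
  have hN : 3 ^ d * 2 ^ ℓ ≤ N := by
    have h2ℓ : (2 : ℝ) ^ ℓ ≤ ((3 : ℝ) ^ d)⁻¹ * N := hℓ.1
    rw [inv_mul_eq_div, le_div_iff₀ (by positivity)] at h2ℓ
    exact_mod_cast (mul_comm _ _).trans_le h2ℓ
  refine iInf_le_mul_iInf (fun _ => unifNorm_nonneg _) (by positivity) fun ⟨s, hs⟩ => ?_
  exact unifNorm_sub_korV_le_distT hex (hs ▸ hN) hf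

/-- Lebesgue-type inequality for the universal Korobov recovery
algorithm `V^ℓ` (Proposition CP1). -/
theorem stmt16 (d m N : ℕ) (hd : 0 < d) (hm : 0 < m) (h : Fin d → ℤ)
    (hex : ∀ f ∈ trigSpace (hyperCross d N),
      (m : ℂ)⁻¹ * ∑ ν ∈ Finset.Icc 1 m, f (korNode m h ν) =
        (((2 * Real.pi) ^ d : ℝ) : ℂ)⁻¹ * ∫ x in cube d, f x)
    (ℓ : ℕ) (hℓ : IsGreatest {k : ℕ | (2 : ℝ) ^ k ≤ ((3 : ℝ) ^ d)⁻¹ * N} ℓ)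
    (f : (Fin d → ℝ) → ℂ) (hf : Continuous f) (hper : Periodic2Pi f) :
    (⨅ s : {s : Fin d → ℕ // (∑ j, s j) = ℓ}, unifNorm (f - korV m h s f)) ≤
      (3 ^ d + 1) *
        ⨅ s : {s : Fin d → ℕ // (∑ j, s j) = ℓ}, distT f (Rbox (s : Fin d → ℕ)) :=
  stmt16_general d m N h hex ℓ hℓ f hf
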